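/- Conjugate characterization of the inner minimization: For fixed vectors cᵢ ∈ ℝ^q (i = 1,…,d) and non-increasing weights λ₁ ≥ … ≥ λ_d ≥ 0, the infimum over B ∈ ℝ^{d×q} of Σᵢ ⟨cᵢ, B_{i,:}⟩ + Σᵢ λᵢ ‖B_{[i],:}‖₂ (where ‖B_{[1],:}‖₂ ≥ … ≥ ‖B_{[d],:}‖₂ is the non-increasing rearrangement of row norms) equals 0 if Σ_{j≤i} c̃_{[j]} ≤ Σ_{j≤i} λⱼ for all i = 1,…,d (where c̃ is the non-increasing rearrangement of (‖c₁‖₂,…,‖c_d‖₂)), and equals -∞ otherwise. -/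
import Mathlib


open scoped BigOperators

/-- `xᵀθ ∈ ℝ^q`: the row vector of inner products of `x ∈ ℝⁿ` with the columns of
`θ ∈ ℝ^{n×q}`. -/
noncomputable def rowDot {n q : ℕ} (x : Fin n → ℝ) (θ : Matrix (Fin n) (Fin q) ℝ) :
    Fin q → ℝ :=
  fun j => ∑ i, x i * θ i j

/-- Euclidean norm of a vector. -/
noncomputable def vnorm {m : ℕ} (v : Fin m → ℝ) : ℝ :=
  Real.sqrt (∑ j, v j ^ 2)

/-- Frobenius norm of a matrix. -/
noncomputable def frob {n q : ℕ} (θ : Matrix (Fin n) (Fin q) ℝ) : ℝ :=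
  Real.sqrt (∑ i, ∑ j, θ i j ^ 2)
/-- The non-increasing rearrangement of a vector `v : Fin d → ℝ`:
`sortDesc v 0 ≥ sortDesc v 1 ≥ …`. -/
noncomputable def sortDesc {d : ℕ} (v : Fin d → ℝ) : Fin d → ℝ :=
  fun i => v (Tuple.sort v i.rev)

/-- The Group OWL penalty `J_λ(B) = Σᵢ λᵢ ‖B_{[i],:}‖₂`, pairing the non-increasing weights
`λ` with the non-increasing rearrangement of the Euclidean row norms of `B`. -/
noncomputable def groupOWL {d q : ℕ} (lam : Fin d → ℝ) (B : Matrix (Fin d) (Fin q) ℝ) : ℝ :=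
  ∑ i, lam i * sortDesc (fun r => vnorm (B r)) i

lemma vnorm_nonneg {m : ℕ} (v : Fin m → ℝ) : 0 ≤ vnorm v := Real.sqrt_nonneg _

lemma vnorm_sq {m : ℕ} (v : Fin m → ℝ) : vnorm v ^ 2 = ∑ j, v j ^ 2 :=
  Real.sq_sqrt (Finset.sum_nonneg fun _ _ => sq_nonneg _)

lemma vnorm_zero {m : ℕ} : vnorm (fun _ => (0:ℝ) : Fin m → ℝ) = 0 := by
  simp [vnorm]

lemma vnorm_smul {m : ℕ} (a : ℝ) (v : Fin m → ℝ) :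
    vnorm (fun j => a * v j) = |a| * vnorm v := by
  unfold vnorm
  rw [← Real.sqrt_sq_eq_abs, ← Real.sqrt_mul (sq_nonneg a)]
  congr 1
  rw [Finset.mul_sum]
  exact Finset.sum_congr rfl fun j _ => by ring

lemma neg_vnorm_mul_le {m : ℕ} (u v : Fin m → ℝ) :
    -(vnorm u * vnorm v) ≤ ∑ j, u j * v j := by
  have h := Finset.sum_mul_sq_le_sq_mul_sq Finset.univ u v
  have h2 : -(∑ j, u j * v j) ≤ vnorm u * vnorm v := by
    calc -(∑ j, u j * v j) ≤ |∑ j, u j * v j| := neg_le_abs _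
    _ = Real.sqrt ((∑ j, u j * v j) ^ 2) := (Real.sqrt_sq_eq_abs _).symm
    _ ≤ Real.sqrt ((∑ j, u j ^ 2) * ∑ j, v j ^ 2) := Real.sqrt_le_sqrt h
    _ = vnorm u * vnorm v := by
        rw [Real.sqrt_mul (Finset.sum_nonneg fun _ _ => sq_nonneg _)]; rfl
  linarith

/-- The sorting permutation for `sortDesc`. -/
noncomputable def descPerm {d : ℕ} (v : Fin d → ℝ) : Equiv.Perm (Fin d) :=
  Fin.revPerm.trans (Tuple.sort v)

lemma sortDesc_eq_comp {d : ℕ} (v : Fin d → ℝ) (i : Fin d) :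
    sortDesc v i = v (descPerm v i) := rfl

lemma sortDesc_antitone {d : ℕ} (v : Fin d → ℝ) : Antitone (sortDesc v) := by
  intro i j hij
  exact Tuple.monotone_sort v (show j.rev ≤ i.rev from Fin.rev_le_rev.mpr hij)

noncomputable def ext0 {d : ℕ} (f : Fin d → ℝ) : ℕ → ℝ :=
  fun n => if h : n < d then f ⟨n, h⟩ else 0

lemma sum_Iic_ext0 {d : ℕ} (f : Fin d → ℝ) (i : Fin d) :
    ∑ j ∈ Finset.Iic i, f j = ∑ j ∈ Finset.range (i.1+1), ext0 f j := by
  refine Finset.sum_bij' (fun (j : Fin d) (_ : j ∈ Finset.Iic i) => j.1)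
    (fun (n : ℕ) (hn : n ∈ Finset.range (i.1+1)) =>
      (⟨n, Nat.lt_of_lt_of_le (Finset.mem_range.mp hn) i.2⟩ : Fin d)) ?_ ?_ ?_ ?_ ?_
  · intro a ha
    have h1 : a ≤ i := Finset.mem_Iic.mp ha
    exact Finset.mem_range.mpr (Nat.lt_succ_of_le (Fin.le_def.mp h1))
  · intro n hn
    have : n ≤ i.1 := Nat.lt_succ_iff.mp (Finset.mem_range.mp hn)
    exact Finset.mem_Iic.mpr (by exact this)
  · intro a ha; rfl
  · intro n hn; rfl
  · intro a ha
    have : a.1 < d := a.2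
    simp [ext0, this]

/-- Abel summation comparison. -/
lemma abel_le {d : ℕ} (lam a b : Fin d → ℝ)
    (h : ∀ i : Fin d, ∑ j ∈ Finset.Iic i, a j ≤ ∑ j ∈ Finset.Iic i, lam j)
    (hb : Antitone b) (hb0 : ∀ i, 0 ≤ b i) :
    ∑ i, a i * b i ≤ ∑ i, lam i * b i := by
  rcases Nat.eq_zero_or_pos d with hd | hd
  · subst hd; simp
  have key : 0 ≤ ∑ i, (lam i - a i) * b i := by
    set e : ℕ → ℝ := ext0 (fun i => lam i - a i) with he
    set bb : ℕ → ℝ := ext0 b with hbb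
    have hG : ∀ n < d, 0 ≤ ∑ j ∈ Finset.range (n+1), e j := by
      intro n hn
      have h3 := sum_Iic_ext0 (fun i => lam i - a i) (⟨n, hn⟩ : Fin d)
      rw [Finset.sum_sub_distrib] at h3
      simp only [he]
      rw [← h3]
      linarith [h ⟨n, hn⟩]
    have hsum : ∑ i, (lam i - a i) * b i = ∑ n ∈ Finset.range d, bb n • e n := by
      rw [← Fin.sum_univ_eq_sum_range]
      apply Finset.sum_congr rfl
      intro j _
      have hj : j.1 < d := j.2
      simp [hbb, he, ext0, hj, smul_eq_mul, mul_comm]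
    rw [hsum, Finset.sum_range_by_parts]
    have hbbanti : Antitone bb := by
      intro m n hmn
      by_cases hm : m < d
      · by_cases hn : n < d
        · simpa [hbb, ext0, hm, hn] using hb (show (⟨m,hm⟩ : Fin d) ≤ ⟨n,hn⟩ from hmn)
        · simpa [hbb, ext0, hm, hn] using hb0 ⟨m, hm⟩
      · have hn : ¬ n < d := fun hn => hm (lt_of_le_of_lt hmn hn)
        simp [hbb, ext0, hm, hn]
    have hbb0 : ∀ n, 0 ≤ bb n := by
      intro n; by_cases hn : n < d <;> simp [hbb, ext0, hn]
      exact hb0 _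
    have t1 : 0 ≤ bb (d-1) • ∑ j ∈ Finset.range d, e j := by
      have : (d-1)+1 = d := Nat.succ_pred_eq_of_pos hd
      refine smul_nonneg (hbb0 _) ?_
      rw [← this]; exact hG _ (by omega)
    have t2 : ∑ n ∈ Finset.range (d-1), (bb (n+1) - bb n) • (∑ j ∈ Finset.range (n+1), e j) ≤ 0 := by
      apply Finset.sum_nonpos
      intro n hn
      have hn' : n < d - 1 := Finset.mem_range.mp hn
      refine mul_nonpos_of_nonpos_of_nonneg ?_ (hG n (by omega))
      have := hbbanti (Nat.le_succ n); linarith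
    linarith
  have : ∑ i, (lam i - a i) * b i = ∑ i, lam i * b i - ∑ i, a i * b i := by
    rw [← Finset.sum_sub_distrib]; apply Finset.sum_congr rfl; intros; ring
  linarith

lemma sortDesc_nonneg {d : ℕ} {v : Fin d → ℝ} (h : ∀ r, 0 ≤ v r) (i : Fin d) :
    0 ≤ sortDesc v i := h _

lemma sum_mul_le_sortDesc {d : ℕ} (v w : Fin d → ℝ) :
    ∑ r, v r * w r ≤ ∑ i, sortDesc v i * sortDesc w i := by
  have hmono : Monovary (sortDesc v) (sortDesc w) :=
    (sortDesc_antitone v).monovary (sortDesc_antitone w)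
  have key := hmono.sum_mul_comp_perm_le_sum_mul
    (σ := (descPerm v).trans (descPerm w).symm)
  refine le_trans (le_of_eq ?_) key
  rw [← Equiv.sum_comp (descPerm v) (fun r => v r * w r)]
  refine Finset.sum_congr rfl fun i _ => ?_
  simp only [sortDesc_eq_comp, Equiv.trans_apply, Equiv.apply_symm_apply]

lemma card_pos_sortDesc {d : ℕ} (w : Fin d → ℝ) :
    (Finset.univ.filter fun i => 0 < sortDesc w i).card
      = (Finset.univ.filter fun r => 0 < w r).card := by
  classical
  refine Finset.card_bij (fun i _ => descPerm w i) ?_ ?_ ?_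
  · intro a ha
    simp only [Finset.mem_filter, Finset.mem_univ, true_and] at ha ⊢
    exact ha
  · intro a1 _ a2 _ h
    exact (descPerm w).injective h
  · intro b hb
    refine ⟨(descPerm w).symm b, ?_, by simp⟩
    simp only [Finset.mem_filter, Finset.mem_univ, true_and] at hb ⊢
    rw [sortDesc_eq_comp]
    simpa using hb

/-- **Conjugate characterization of the inner minimization.** For fixed rows
`cᵢ ∈ ℝ^q` and non-increasing nonnegative weights `λ`, the infimum over `B ∈ ℝ^{d×q}` of
`Σᵢ ⟨cᵢ, B_{i,:}⟩ + J_λ(B)` equals `0` if the sorted row norms `c̃` of `C` satisfy the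
partial-sum constraints `Σ_{j≤i} c̃_{[j]} ≤ Σ_{j≤i} λⱼ` for all `i`, and equals `-∞`
otherwise. -/
theorem groupOWL_inner_min_conjugate {d q : ℕ}
    (lam : Fin d → ℝ) (hmono : ∀ i j : Fin d, i ≤ j → lam j ≤ lam i)
    (hnn : ∀ i, 0 ≤ lam i)
    (c : Matrix (Fin d) (Fin q) ℝ) :
    ((∀ i : Fin d,
        ∑ j ∈ Finset.Iic i, sortDesc (fun r => vnorm (c r)) j ≤ ∑ j ∈ Finset.Iic i, lam j) →
      (⨅ B : Matrix (Fin d) (Fin q) ℝ,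
        (((∑ i, ∑ j, c i j * B i j) + groupOWL lam B : ℝ) : EReal)) = 0) ∧
    ((¬ ∀ i : Fin d,
        ∑ j ∈ Finset.Iic i, sortDesc (fun r => vnorm (c r)) j ≤ ∑ j ∈ Finset.Iic i, lam j) →
      (⨅ B : Matrix (Fin d) (Fin q) ℝ,
        (((∑ i, ∑ j, c i j * B i j) + groupOWL lam B : ℝ) : EReal)) = ⊥) := by
  classical
  constructor
  · intro hc
    apply le_antisymm
    · have h0 := iInf_le (fun B : Matrix (Fin d) (Fin q) ℝ =>
        (((∑ i, ∑ j, c i j * B i j) + groupOWL lam B : ℝ) : EReal)) (0 : Matrix (Fin d) (Fin q) ℝ)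
      have hz : ((∑ i, ∑ j, c i j * (0 : Matrix (Fin d) (Fin q) ℝ) i j)
          + groupOWL lam (0 : Matrix (Fin d) (Fin q) ℝ) : ℝ) = 0 := by
        simp [groupOWL, sortDesc, vnorm]
      rw [hz] at h0
      exact_mod_cast h0
    · refine le_iInf fun B => ?_
      rw [← EReal.coe_zero, EReal.coe_le_coe_iff]
      set v : Fin d → ℝ := fun r => vnorm (c r) with hv
      set w : Fin d → ℝ := fun r => vnorm (B r) with hw
      have step0 : -(∑ r, v r * w r) ≤ ∑ i, ∑ j, c i j * B i j := by
        have h1 : ∀ r, -(v r * w r) ≤ ∑ j, c r j * B r j :=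
          fun r => neg_vnorm_mul_le (c r) (B r)
        calc -(∑ r, v r * w r) = ∑ r, -(v r * w r) := by
              rw [Finset.sum_neg_distrib]
        _ ≤ ∑ r, ∑ j, c r j * B r j := Finset.sum_le_sum fun r _ => h1 r
      have stepA := sum_mul_le_sortDesc v w
      have stepB : ∑ i, sortDesc v i * sortDesc w i ≤ ∑ i, lam i * sortDesc w i :=
        abel_le lam (sortDesc v) (sortDesc w) hc (sortDesc_antitone w)
          (sortDesc_nonneg fun r => vnorm_nonneg _)
      have hgo : groupOWL lam B = ∑ i, lam i * sortDesc w i := rfl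
      linarith
  · intro hc
    push_neg at hc
    obtain ⟨i₀, hi₀⟩ := hc
    rw [iInf_eq_bot]
    intro b hb
    obtain ⟨x, -, hxb⟩ := EReal.lt_iff_exists_real_btwn.mp hb
    set v : Fin d → ℝ := fun r => vnorm (c r) with hv
    set δ : ℝ := (∑ j ∈ Finset.Iic i₀, sortDesc v j) - (∑ j ∈ Finset.Iic i₀, lam j) with hδ
    have hδpos : 0 < δ := by rw [hδ]; linarith
    set t : ℝ := max 0 ((|x| + 1) / δ) with ht
    have ht0 : 0 ≤ t := le_max_left _ _
    have htδ : |x| + 1 ≤ t * δ := by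
      have h1 : (|x| + 1) / δ ≤ t := le_max_right _ _
      calc |x| + 1 = ((|x| + 1) / δ) * δ := by field_simp
      _ ≤ t * δ := mul_le_mul_of_nonneg_right h1 hδpos.le
    set S : Finset (Fin d) := (Finset.Iic i₀).image (fun j => descPerm v j) with hS
    set B : Matrix (Fin d) (Fin q) ℝ :=
      fun r j => if r ∈ S ∧ 0 < v r then -t / v r * c r j else 0 with hB
    refine ⟨B, ?_⟩
    -- row norms of B
    have hwrow : ∀ r, vnorm (B r) = if r ∈ S ∧ 0 < v r then t else 0 := by
      intro r
      by_cases h : r ∈ S ∧ 0 < v r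
      · have hBr : B r = fun j => -t / v r * c r j := by
          funext j; simp only [hB]; rw [if_pos h]
        rw [hBr, vnorm_smul, if_pos h]
        have hvr : v r = vnorm (c r) := by rw [hv]
        rw [← hvr, abs_div, abs_neg, abs_of_nonneg ht0, abs_of_pos h.2,
          div_mul_cancel₀ t h.2.ne']
      · have hBr : B r = fun j => (0:ℝ) := by
          funext j; simp only [hB]; rw [if_neg h]
        rw [hBr, vnorm_zero, if_neg h]
    -- inner product value
    have hrow : ∀ r, ∑ j, c r j * B r j = if r ∈ S ∧ 0 < v r then -t * v r else 0 := by
      intro r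
      by_cases h : r ∈ S ∧ 0 < v r
      · rw [if_pos h]
        have hBr : ∀ j, B r j = -t / v r * c r j := by
          intro j; simp only [hB]; rw [if_pos h]
        have : ∑ j, c r j * B r j = -t / v r * ∑ j, c r j ^ 2 := by
          rw [Finset.mul_sum]
          exact Finset.sum_congr rfl fun j _ => by rw [hBr j]; ring
        rw [this, ← vnorm_sq (c r)]
        have hvr : vnorm (c r) = v r := by rw [hv]
        rw [hvr, pow_two, ← mul_assoc, div_mul_cancel₀ (-t) h.2.ne', neg_mul]
      · rw [if_neg h]
        refine Finset.sum_eq_zero fun j _ => ?_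
        simp only [hB]; rw [if_neg h, mul_zero]
    have hinner : ∑ i, ∑ j, c i j * B i j = -t * ∑ j ∈ Finset.Iic i₀, sortDesc v j := by
      rw [Finset.sum_congr rfl fun r _ => hrow r, ← Finset.sum_filter, ← Finset.mul_sum]
      congr 1
      have hsub : Finset.univ.filter (fun r => r ∈ S ∧ 0 < v r) ⊆ S := by
        intro x hx
        exact (Finset.mem_filter.mp hx).2.1
      have hzero : ∀ x ∈ S, x ∉ Finset.univ.filter (fun r => r ∈ S ∧ 0 < v r) → v x = 0 := by
        intro x hxS hxn
        have : ¬ (0 < v x) := by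
          intro hpos
          exact hxn (Finset.mem_filter.mpr ⟨Finset.mem_univ _, hxS, hpos⟩)
        have hvx : 0 ≤ v x := vnorm_nonneg _
        exact le_antisymm (not_lt.mp this) hvx
      rw [Finset.sum_subset hsub hzero, hS,
        Finset.sum_image (fun j _ j' _ h => (descPerm v).injective h)]
      exact Finset.sum_congr rfl fun j _ => (sortDesc_eq_comp v j).symm
    -- penalty bound
    have hcard : (Finset.univ.filter fun r => 0 < vnorm (B r)).card ≤ i₀.1 + 1 := by
      have hsub : (Finset.univ.filter fun r => 0 < vnorm (B r)) ⊆ S := by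
        intro r hr
        have := (Finset.mem_filter.mp hr).2
        rw [hwrow r] at this
        by_contra hrs
        have : ¬ (r ∈ S ∧ 0 < v r) := fun hh => hrs hh.1
        rw [if_neg this] at *
        simp_all
      calc (Finset.univ.filter fun r => 0 < vnorm (B r)).card ≤ S.card :=
        Finset.card_le_card hsub
      _ ≤ (Finset.Iic i₀).card := Finset.card_image_le
      _ = i₀.1 + 1 := Fin.card_Iic i₀
    have htail : ∀ i : Fin d, i₀ < i → sortDesc (fun r => vnorm (B r)) i = 0 := by
      intro i hi
      by_contra hne
      have hpos : 0 < sortDesc (fun r => vnorm (B r)) i :=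
        lt_of_le_of_ne (sortDesc_nonneg (fun r => vnorm_nonneg _) i) (Ne.symm hne)
      have hsub : Finset.Iic i ⊆ Finset.univ.filter
          (fun j => 0 < sortDesc (fun r => vnorm (B r)) j) := by
        intro j hj
        refine Finset.mem_filter.mpr ⟨Finset.mem_univ _, ?_⟩
        exact lt_of_lt_of_le hpos
          (sortDesc_antitone (fun r => vnorm (B r)) (Finset.mem_Iic.mp hj))
      have h1 := Finset.card_le_card hsub
      rw [Fin.card_Iic, card_pos_sortDesc] at h1
      have := le_trans h1 hcard
      omega
    have hsort_le : ∀ i : Fin d, sortDesc (fun r => vnorm (B r)) i ≤ t := by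
      intro i
      rw [sortDesc_eq_comp, hwrow]
      split <;> simp [ht0]
    have hpen : groupOWL lam B ≤ t * ∑ j ∈ Finset.Iic i₀, lam j := by
      unfold groupOWL
      have hstep : ∑ i, lam i * sortDesc (fun r => vnorm (B r)) i
          = ∑ i ∈ Finset.Iic i₀, lam i * sortDesc (fun r => vnorm (B r)) i := by
        symm
        apply Finset.sum_subset (Finset.subset_univ _)
        intro x _ hx
        rw [htail x (lt_of_not_ge (fun hh => hx (Finset.mem_Iic.mpr hh))), mul_zero]
      rw [hstep, Finset.mul_sum]
      refine Finset.sum_le_sum fun i _ => ?_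
      rw [mul_comm t (lam i)]
      exact mul_le_mul_of_nonneg_left (hsort_le i) (hnn i)
    have hval : (∑ i, ∑ j, c i j * B i j) + groupOWL lam B ≤ -(t * δ) := by
      rw [hinner, hδ]
      nlinarith [hpen]
    have hltx : ((∑ i, ∑ j, c i j * B i j) + groupOWL lam B : ℝ) < x := by
      have := neg_abs_le x
      nlinarith
    calc (((∑ i, ∑ j, c i j * B i j) + groupOWL lam B : ℝ) : EReal)
        < (x : EReal) := EReal.coe_lt_coe_iff.mpr hltx
    _ < b := hxb
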